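/- Let a K4-vector with members {A_{i_1}, A_{i_2}, A_{i_3}, B_j} not saturate the (m,n) toric inequality (so the g-function of the A-triple is {1,1,1}). Adjoin any non-member region with bond weight 2 to form a 5-armed star with weights {2,1,1,1,1}. Then the resulting entropy vector saturates the toric inequality. -/

import Mathlib

/-!
Write `m = 2c + 1`, `n = 2c' + 1` and `f x = min x (6 - x)`. Lengthening the `A`-segment that
starts at `i` from `c` to `c + 1` regions adds the region `p = i + c`, so the difference of the two
double sums is `∑ₚ (Φ (αₚ + wₚ) - Φ αₚ)`, where `αₚ` is the weight of the `c` regions just behind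
`p` and `Φ x = ∑ⱼ f (x + βⱼ)`, `βⱼ` being the weight of the `j`-th `B`-segment. Only weighted
`A`-regions contribute.

The hypothesis on `g` says that the three unit `A`-arms form a cyclic triangle for the relation
"`q` is at most `c` steps ahead of `p`". Hence each of them has exactly one arm within `c` steps
behind it, and no other region has all three within `c` steps ahead of it, or all three behind it.
As a given `B`-region lies in exactly `c'` of the `n` segments `B_j … B_{j+c'-1}`, `Φ` is explicit,
and the sum evaluates to `f 5 = 1` when the weight-`2` region is an `A`-region, and to
`3 (Φ 2 - Φ 1) = 3 = f 3` when it is a `B`-region.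
-/

/-- The union of `c` consecutively indexed `A`-regions starting at `A_i`. -/
def ASeg (m n : ℕ) [NeZero m] [NeZero n] (i : ZMod m) (c : ℕ) :
    Finset (ZMod m ⊕ ZMod n) :=
  (Finset.range c).image (fun d : ℕ => Sum.inl (i + (d : ZMod m)))

/-- The union of `c` consecutively indexed `B`-regions starting at `B_j`. -/
def BSeg (m n : ℕ) [NeZero m] [NeZero n] (j : ZMod n) (c : ℕ) :
    Finset (ZMod m ⊕ ZMod n) :=
  (Finset.range c).image (fun d : ℕ => Sum.inr (j + (d : ZMod n)))

open Finset

namespace ZMod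

lemma val_sub_add_val_sub {k : ℕ} [NeZero k] {p q : ZMod k} (h : p ≠ q) :
    (q - p).val + (p - q).val = k := by
  have hne : q - p ≠ 0 := sub_ne_zero.2 h.symm
  rw [← neg_sub q p, neg_val, if_neg hne]
  have := val_lt (q - p)
  omega

lemma natCast_injOn_range {k : ℕ} : Set.InjOn (fun d : ℕ => (d : ZMod k)) (range k) := by
  intro d hd e he h
  simp only [coe_range, Set.mem_Iio] at hd he
  simpa [natCast_eq_natCast_iff', Nat.mod_eq_of_lt hd, Nat.mod_eq_of_lt he] using h

end ZMod

section CyclicOrder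

def Ahead (c : ℕ) (p q : ZMod (2 * c + 1)) : Prop := (q - p).val ∈ Icc 1 c

instance (c : ℕ) : DecidableRel (Ahead c) := fun _ _ => inferInstanceAs (Decidable (_ ∈ _))

variable {c : ℕ} {p q x y : ZMod (2 * c + 1)}

lemma ahead_iff_mem_image : Ahead c p q ↔ q ∈ (Icc 1 c).image (fun d : ℕ => p + d) := by
  refine ⟨fun h => mem_image.2 ⟨_, h, by rw [ZMod.natCast_zmod_val]; ring⟩, fun h => ?_⟩
  obtain ⟨d, hd, rfl⟩ := mem_image.1 h
  rw [mem_Icc] at hd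
  rw [Ahead, add_sub_cancel_left, ZMod.val_cast_of_lt (by omega)]
  simpa using hd

lemma Ahead.irrefl (p : ZMod (2 * c + 1)) : ¬ Ahead c p p := by
  simp [Ahead]

lemma Ahead.asymm (h : Ahead c p q) : ¬ Ahead c q p := by
  rcases eq_or_ne p q with rfl | hpq
  · exact Ahead.irrefl p
  · have := ZMod.val_sub_add_val_sub hpq
    simp only [Ahead, mem_Icc] at h ⊢
    omega

lemma Ahead.of_not (hpq : p ≠ q) (h : ¬ Ahead c q p) : Ahead c p q := by
  have := ZMod.val_sub_add_val_sub hpq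
  have := ZMod.val_lt (p - q)
  have := ZMod.val_lt (q - p)
  simp only [Ahead, mem_Icc] at h ⊢
  omega

lemma Ahead.of_val_lt (hp : Ahead c x p) (hq : Ahead c x q) (hlt : (p - x).val < (q - x).val) :
    Ahead c p q := by
  have hsub : q - p = (q - x) - (p - x) := by ring
  simp only [Ahead, mem_Icc] at hp hq ⊢
  rw [hsub, ZMod.val_sub hlt.le]
  omega

-- `y + c = y - (c + 1)`, so the `c` regions ahead of it are the `c` regions behind `y`.
lemma Ahead.add_ahead (h : Ahead c p y) : Ahead c (y + c) p := by
  have hv := mem_Icc.1 h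
  have hcast : p - (y + c) = ((c + 1 - (y - p).val : ℕ) : ZMod (2 * c + 1)) := by
    have h0 : ((2 * c + 1 : ℕ) : ZMod (2 * c + 1)) = 0 := ZMod.natCast_self _
    rw [Nat.cast_sub (by omega), ZMod.natCast_zmod_val]
    push_cast at h0 ⊢
    linear_combination -h0
  rw [Ahead, hcast, ZMod.val_cast_of_lt (by omega), mem_Icc]
  omega

end CyclicOrder

section Arcs

def arc {k : ℕ} (i : ZMod k) (l : ℕ) : Finset (ZMod k) := (range l).image (fun d : ℕ => i + d)

lemma arc_succ {k : ℕ} (i : ZMod k) (l : ℕ) : arc i (l + 1) = insert (i + l) (arc i l) := by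
  rw [arc, range_add_one, image_insert, arc]

lemma card_filter_mem_arc {k : ℕ} [NeZero k] (q : ZMod k) {l : ℕ} (hl : l ≤ k) :
    #{j | q ∈ arc j l} = l := by
  have : ({j | q ∈ arc j l} : Finset (ZMod k)) = (range l).image (fun d : ℕ => q - d) := by
    ext j
    simp only [arc, mem_filter, mem_univ, true_and, mem_image, mem_range, sub_eq_iff_eq_add,
      add_comm j, eq_comm (b := q)]
  rw [this, card_image_of_injOn, card_range]
  intro d hd e he h
  exact ZMod.natCast_injOn_range (range_subset_range.2 hl hd) (range_subset_range.2 hl he)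
    (sub_right_injective h)

lemma mem_arc_sub_iff_ahead {c : ℕ} {p q : ZMod (2 * c + 1)} :
    q ∈ arc (p - (c : ZMod (2 * c + 1))) c ↔ Ahead c q p := by
  simp only [arc, mem_image, mem_range]
  constructor
  · rintro ⟨d, hd, rfl⟩
    rw [Ahead, show p - (p - c + d) = ((c - d : ℕ) : ZMod (2 * c + 1)) by
      rw [Nat.cast_sub hd.le]; ring, ZMod.val_cast_of_lt (by omega), mem_Icc]
    omega
  · intro h
    have hv := mem_Icc.1 h
    refine ⟨c - (p - q).val, by omega, ?_⟩
    rw [Nat.cast_sub hv.2, ZMod.natCast_zmod_val]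
    ring

lemma filter_ahead_eq_arc {c : ℕ} (p : ZMod (2 * c + 1)) :
    ({q | Ahead c q p} : Finset _) = arc (p - (c : ZMod (2 * c + 1))) c := by
  ext q
  simp [mem_arc_sub_iff_ahead]

lemma ASeg_eq_image_arc (m n : ℕ) [NeZero m] [NeZero n] (i : ZMod m) (l : ℕ) :
    ASeg m n i l = (arc i l).image Sum.inl := by
  rw [arc, image_image]; rfl

lemma BSeg_eq_image_arc (m n : ℕ) [NeZero m] [NeZero n] (j : ZMod n) (l : ℕ) :
    BSeg m n j l = (arc j l).image Sum.inr := by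
  rw [arc, image_image]; rfl

lemma sum_ASeg_union_BSeg {m n : ℕ} [NeZero m] [NeZero n] {M : Type*} [AddCommMonoid M]
    (w : ZMod m ⊕ ZMod n → M) (i : ZMod m) (j : ZMod n) (l l' : ℕ) :
    ∑ x ∈ ASeg m n i l ∪ BSeg m n j l', w x =
      ∑ p ∈ arc i l, w (Sum.inl p) + ∑ q ∈ arc j l', w (Sum.inr q) := by
  rw [ASeg_eq_image_arc, BSeg_eq_image_arc, sum_union, sum_image Sum.inl_injective.injOn,
    sum_image Sum.inr_injective.injOn]
  simp [disjoint_left]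

end Arcs

section Tournament

variable {c : ℕ}

lemma card_filter_ahead_add_card_filter_ahead (T : Finset (ZMod (2 * c + 1)))
    (x : ZMod (2 * c + 1)) :
    #(T.filter (Ahead c · x)) + #(T.filter (Ahead c x ·)) = #(T.erase x) := by
  rw [← card_filter_add_card_filter_not (s := T.erase x) (Ahead c · x)]
  congr 2 <;> ext q <;> simp only [mem_filter, mem_erase]
  · exact ⟨fun ⟨hq, h⟩ => ⟨⟨fun e => Ahead.irrefl x (e ▸ h), hq⟩, h⟩, fun ⟨⟨_, hq⟩, h⟩ => ⟨hq, h⟩⟩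
  · exact ⟨fun ⟨hq, h⟩ => ⟨⟨fun e => Ahead.irrefl x (e ▸ h), hq⟩, h.asymm⟩,
      fun ⟨⟨hne, hq⟩, h⟩ => ⟨hq, Ahead.of_not (Ne.symm hne) h⟩⟩

lemma exists_filter_ahead_eq_erase {T : Finset (ZMod (2 * c + 1))} (hT : T.Nonempty)
    {x : ZMod (2 * c + 1)} (hx : ∀ q ∈ T, Ahead c x q) :
    ∃ p ∈ T, T.filter (Ahead c p ·) = T.erase p := by
  obtain ⟨p, hp, hmin⟩ := T.exists_min_image (fun q => (q - x).val) hT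
  refine ⟨p, hp, ?_⟩
  ext q
  simp only [mem_filter, mem_erase]
  refine ⟨fun ⟨hq, h⟩ => ⟨fun e => Ahead.irrefl p (e ▸ h), hq⟩, fun ⟨hne, hq⟩ => ⟨hq, ?_⟩⟩
  refine Ahead.of_val_lt (hx p hp) (hx q hq) (lt_of_le_of_ne (hmin q hq) fun h => hne ?_)
  exact (sub_left_injective (ZMod.val_injective _ h)).symm

variable {T : Finset (ZMod (2 * c + 1))}

lemma card_filter_ahead_left_eq_one (hT : #T = 3)
    (hcyc : ∀ p ∈ T, #(T.filter (Ahead c p ·)) = 1) {p : ZMod (2 * c + 1)} (hp : p ∈ T) :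
    #(T.filter (Ahead c · p)) = 1 := by
  have := card_filter_ahead_add_card_filter_ahead T p
  rw [hcyc p hp, card_erase_of_mem hp, hT] at this
  omega

lemma exists_not_ahead (hT : #T = 3) (hcyc : ∀ p ∈ T, #(T.filter (Ahead c p ·)) = 1)
    (x : ZMod (2 * c + 1)) : ∃ q ∈ T, ¬ Ahead c x q := by
  by_contra! hx
  obtain ⟨p, hp, h⟩ := exists_filter_ahead_eq_erase (card_pos.1 (by omega)) hx
  have := hcyc p hp
  rw [h, card_erase_of_mem hp, hT] at this
  omega

lemma exists_not_ahead_left (hT : #T = 3) (hcyc : ∀ p ∈ T, #(T.filter (Ahead c p ·)) = 1)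
    (y : ZMod (2 * c + 1)) : ∃ q ∈ T, ¬ Ahead c q y := by
  by_contra! hy
  obtain ⟨q, hq, h⟩ := exists_not_ahead hT hcyc (y + c)
  exact h (hy q hq).add_ahead

lemma card_filter_ahead_mem_Icc (hT : #T = 3) (hcyc : ∀ p ∈ T, #(T.filter (Ahead c p ·)) = 1)
    {x : ZMod (2 * c + 1)} (hx : x ∉ T) : #(T.filter (Ahead c x ·)) ∈ Icc 1 2 := by
  have hsum := card_filter_ahead_add_card_filter_ahead T x
  rw [erase_eq_of_notMem hx, hT] at hsum
  have h1 : #(T.filter (Ahead c x ·)) < #T :=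
    card_lt_card (filter_ssubset.2 (exists_not_ahead hT hcyc x))
  have h2 : #(T.filter (Ahead c · x)) < #T :=
    card_lt_card (filter_ssubset.2 (exists_not_ahead_left hT hcyc x))
  rw [mem_Icc]
  omega

end Tournament

section Entropy

def starEntropy (W x : ℕ) : ℚ := (min x (W - x) : ℕ)

lemma min_sum_sum_compl {α : Type*} [Fintype α] [DecidableEq α] (w : α → ℕ) (X : Finset α) :
    ((min (∑ x ∈ X, w x) (∑ x ∈ Xᶜ, w x) : ℕ) : ℚ) = starEntropy (∑ x, w x) (∑ x ∈ X, w x) := by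
  rw [starEntropy, ← sum_add_sum_compl X w, Nat.add_sub_cancel_left]

lemma sum_comp_add_of_le_one {ι : Type*} [Fintype ι] (φ : ℕ → ℚ) {β : ι → ℕ}
    (hβ : ∀ j, β j ≤ 1) (x : ℕ) :
    ∑ j, φ (x + β j) = Fintype.card ι * φ x + (∑ j, β j : ℕ) * (φ (x + 1) - φ x) := by
  have h : ∀ j, φ (x + β j) = φ x + β j * (φ (x + 1) - φ x) := fun j => by
    rcases Nat.le_one_iff_eq_zero_or_eq_one.1 (hβ j) with h | h <;> simp [h]
  simp [h, sum_add_distrib, sum_mul]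

lemma sum_starEntropy_two_sub_one {ι : Type*} [Fintype ι] {g e : ι → ℕ} (hg : ∀ j, g j ≤ 1)
    (he : ∀ j, e j ≤ 1) :
    ∑ j, (starEntropy 6 (2 + (2 * g j + e j)) - starEntropy 6 (1 + (2 * g j + e j))) =
      Fintype.card ι - 2 * (∑ j, g j : ℕ) := by
  have h : ∀ j, starEntropy 6 (2 + (2 * g j + e j)) - starEntropy 6 (1 + (2 * g j + e j)) =
      1 - 2 * g j := fun j => by
    have := hg j; have := he j
    interval_cases g j <;> interval_cases e j <;> norm_num [starEntropy]
  simp [h, sum_sub_distrib, mul_sum]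

end Entropy

section Gain

/-- The increase of `∑ᵢ Φ (w (A_i … A_{i+c-1}))` when every segment gets one more region,
collected at the added region `p`. -/
def arcGain (c : ℕ) (wA : ZMod (2 * c + 1) → ℕ) (Φ : ℕ → ℚ) : ℚ :=
  ∑ p, (Φ (∑ q with Ahead c q p, wA q + wA p) - Φ (∑ q with Ahead c q p, wA q))

variable {c : ℕ}

lemma sum_sum_arc_succ_eq_add_arcGain {ι : Type*} [Fintype ι] (wA : ZMod (2 * c + 1) → ℕ)
    (β : ι → ℕ) (φ : ℕ → ℚ) :
    ∑ i, ∑ j, φ (∑ p ∈ arc i (c + 1), wA p + β j) =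
      ∑ i, ∑ j, φ (∑ p ∈ arc i c, wA p + β j) + arcGain c wA (fun x => ∑ j, φ (x + β j)) := by
  rw [arcGain, ← sub_eq_iff_eq_add', ← sum_sub_distrib,
    ← (Equiv.subRight (c : ZMod (2 * c + 1))).sum_comp]
  refine sum_congr rfl fun p _ => ?_
  have hp : p ∉ arc (p - (c : ZMod (2 * c + 1))) c := by
    rw [mem_arc_sub_iff_ahead]; exact Ahead.irrefl p
  simp only [Equiv.subRight_apply, arc_succ, sub_add_cancel, sum_insert hp, filter_ahead_eq_arc,
    add_comm (wA p)]

variable {T : Finset (ZMod (2 * c + 1))} {wA : ZMod (2 * c + 1) → ℕ}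

lemma arcGain_indicator_eq (hT : #T = 3) (hcyc : ∀ p ∈ T, #(T.filter (Ahead c p ·)) = 1)
    (hwA : ∀ p, wA p = if p ∈ T then 1 else 0) (Φ : ℕ → ℚ) :
    arcGain c wA Φ = 3 * (Φ 2 - Φ 1) := by
  have hα : ∀ p ∈ T, ∑ q with Ahead c q p, wA q = 1 := fun p hp =>
    .trans (by simp [hwA, filter_inter]) (card_filter_ahead_left_eq_one hT hcyc hp)
  rw [arcGain, ← sum_subset (subset_univ T) fun p _ hp => by simp [hwA, hp]]
  rw [sum_congr rfl fun p hp => by rw [hα p hp, hwA, if_pos hp]]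
  simp [hT, mul_sub]

lemma arcGain_indicator_add_double_eq_one (hT : #T = 3)
    (hcyc : ∀ p ∈ T, #(T.filter (Ahead c p ·)) = 1) {r : ZMod (2 * c + 1)} (hr : r ∉ T)
    (hwA : ∀ p, wA p = 2 * (if p = r then 1 else 0) + if p ∈ T then 1 else 0)
    {n : ℕ} {Φ : ℕ → ℚ} (hΦ : ∀ x, Φ x =
      (2 * n + 1) * starEntropy 6 x + n * (starEntropy 6 (x + 1) - starEntropy 6 x)) :
    arcGain c wA Φ = 1 := by
  have hα : ∀ p, ∑ q with Ahead c q p, wA q =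
      2 * (if Ahead c r p then 1 else 0) + #(T.filter (Ahead c · p)) := fun p => by
    simp [hwA, sum_add_distrib, filter_inter]
  have hαr : ∑ q with Ahead c q r, wA q = 3 - #(T.filter (Ahead c r ·)) := by
    have := card_filter_ahead_add_card_filter_ahead T r
    rw [erase_eq_of_notMem hr, hT] at this
    rw [hα, if_neg (Ahead.irrefl r)]
    omega
  have hterm : ∀ p ∈ T, Φ (∑ q with Ahead c q p, wA q + wA p) - Φ (∑ q with Ahead c q p, wA q) =
      (2 * n + 1) * (1 - 2 * if Ahead c r p then 1 else 0) := fun p hp => by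
    have hpr : p ≠ r := fun h => hr (h ▸ hp)
    rw [hα, card_filter_ahead_left_eq_one hT hcyc hp, hwA, if_neg hpr, if_pos hp]
    split_ifs <;> norm_num [hΦ, starEntropy] <;> ring
  rw [arcGain, ← sum_subset (subset_univ (insert r T)) fun p _ hp => by simp_all, sum_insert hr,
    sum_congr rfl hterm, hαr, hwA, if_pos rfl, if_neg hr, ← mul_sum, sum_sub_distrib, ← mul_sum]
  simp only [sum_boole]
  have hH := mem_Icc.1 (card_filter_ahead_mem_Icc hT hcyc hr)
  rcases (show #(T.filter (Ahead c r ·)) = 1 ∨ #(T.filter (Ahead c r ·)) = 2 by omega)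
    with h | h <;> simp [h, hT] <;> norm_num [hΦ, starEntropy] <;> ring

end Gain

section Saturation

variable {c c' : ℕ} {T : Finset (ZMod (2 * c + 1))}
  {w : ZMod (2 * c + 1) ⊕ ZMod (2 * c' + 1) → ℕ}
  {S : Finset (ZMod (2 * c + 1) ⊕ ZMod (2 * c' + 1)) → ℚ}

lemma toric_saturated_of_inl (hT : #T = 3) (hcyc : ∀ p ∈ T, #(T.filter (Ahead c p ·)) = 1)
    {rA : ZMod (2 * c + 1)} (hrA : rA ∉ T) {jB : ZMod (2 * c' + 1)}
    (hwA : ∀ p, w (.inl p) = 2 * (if p = rA then 1 else 0) + if p ∈ T then 1 else 0)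
    (hwB : ∀ q, w (.inr q) = if q = jB then 1 else 0)
    (hS : ∀ X, S X = ((min (∑ x ∈ X, w x) (∑ x ∈ Xᶜ, w x) : ℕ) : ℚ)) :
    ∑ i, ∑ j, S (ASeg _ _ i (c + 1) ∪ BSeg _ _ j c') =
      ∑ i, ∑ j, S (ASeg _ _ i c ∪ BSeg _ _ j c') + S (univ.image Sum.inl) := by
  have hW : ∑ x, w x = 6 := by
    simp [Fintype.sum_sum_type, hwA, hwB, sum_add_distrib, hT]
  have hβ : ∀ j, ∑ q ∈ arc j c', w (.inr q) = if jB ∈ arc j c' then 1 else 0 := fun j => by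
    simp [hwB]
  simp only [hS, min_sum_sum_compl, hW]
  simp only [sum_ASeg_union_BSeg]
  rw [sum_sum_arc_succ_eq_add_arcGain, add_right_inj,
    arcGain_indicator_add_double_eq_one hT hcyc hrA hwA (n := c') fun x => ?_]
  · rw [sum_image Sum.inl_injective.injOn]
    simp [hwA, sum_add_distrib, hT]
    norm_num [starEntropy]
  · simp only [hβ]
    rw [sum_comp_add_of_le_one _ (fun j => by split_ifs <;> simp), sum_boole,
      card_filter_mem_arc _ (by omega), ZMod.card]
    push_cast
    ring

lemma toric_saturated_of_inr (hT : #T = 3) (hcyc : ∀ p ∈ T, #(T.filter (Ahead c p ·)) = 1)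
    {rB jB : ZMod (2 * c' + 1)} (hwA : ∀ p, w (.inl p) = if p ∈ T then 1 else 0)
    (hwB : ∀ q, w (.inr q) = 2 * (if q = rB then 1 else 0) + if q = jB then 1 else 0)
    (hS : ∀ X, S X = ((min (∑ x ∈ X, w x) (∑ x ∈ Xᶜ, w x) : ℕ) : ℚ)) :
    ∑ i, ∑ j, S (ASeg _ _ i (c + 1) ∪ BSeg _ _ j c') =
      ∑ i, ∑ j, S (ASeg _ _ i c ∪ BSeg _ _ j c') + S (univ.image Sum.inl) := by
  have hW : ∑ x, w x = 6 := by
    simp [Fintype.sum_sum_type, hwA, hwB, sum_add_distrib, hT]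
  have hβ : ∀ j, ∑ q ∈ arc j c', w (.inr q) =
      2 * (if rB ∈ arc j c' then 1 else 0) + if jB ∈ arc j c' then 1 else 0 := fun j => by
    simp [hwB, sum_add_distrib]
  simp only [hS, min_sum_sum_compl, hW]
  simp only [sum_ASeg_union_BSeg]
  rw [sum_sum_arc_succ_eq_add_arcGain, add_right_inj, arcGain_indicator_eq hT hcyc hwA]
  simp only [hβ, ← sum_sub_distrib]
  rw [sum_starEntropy_two_sub_one (fun j => by split_ifs <;> simp) (fun j => by split_ifs <;> simp),
    sum_boole, card_filter_mem_arc _ (by omega), ZMod.card, sum_image Sum.inl_injective.injOn]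
  simp [hwA, hT]
  norm_num [starEntropy]

end Saturation

/-- Let a K4-vector with members `A_{i₁}, A_{i₂}, A_{i₃}, B_j` fail to saturate the
`(m,n)` toric inequality, i.e. the counting function `g` of the `A`-triple is
`{1,1,1}`.  Adjoin any non-member region `r` with bond weight `2`, forming a
5-armed star graph with weights `{2,1,1,1,1}` and min-cut entropies
`S X = min(w(X), w(Xᶜ))`.  Then the resulting entropy vector saturates the toric
inequality. -/
theorem stmt_13 (m n : ℕ) [NeZero m] [NeZero n] (hm : Odd m) (hn : Odd n)
    (a : Fin 3 → ZMod m) (ha : Function.Injective a)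
    (hg : ∀ t : Fin 3, (Finset.univ.filter (fun s : Fin 3 =>
        a s ∈ (Finset.Icc 1 ((m-1)/2)).image (fun d : ℕ => a t + (d : ZMod m)))).card = 1)
    (jB : ZMod n)
    (r : ZMod m ⊕ ZMod n)
    (hrA : ∀ t, r ≠ Sum.inl (a t)) (hrB : r ≠ Sum.inr jB)
    (w : (ZMod m ⊕ ZMod n) → ℕ)
    (hw : ∀ x, w x = if x = r then 2
        else if (∃ t : Fin 3, x = Sum.inl (a t)) ∨ x = Sum.inr jB then 1 else 0)
    (S : Finset (ZMod m ⊕ ZMod n) → ℚ)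
    (hS : ∀ X, S X = ((min (∑ x ∈ X, w x) (∑ x ∈ Xᶜ, w x) : ℕ) : ℚ)) :
    (∑ i : ZMod m, ∑ j : ZMod n, S (ASeg m n i ((m+1)/2) ∪ BSeg m n j ((n-1)/2)))
      = (∑ i : ZMod m, ∑ j : ZMod n, S (ASeg m n i ((m-1)/2) ∪ BSeg m n j ((n-1)/2)))
        + S (Finset.univ.image Sum.inl) := by
  obtain ⟨c, rfl⟩ := hm
  obtain ⟨c', rfl⟩ := hn
  simp only [show (2 * c + 1 + 1) / 2 = c + 1 by omega, show (2 * c + 1 - 1) / 2 = c by omega,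
    show (2 * c' + 1 - 1) / 2 = c' by omega] at hg ⊢
  set T := univ.image a
  have hT : #T = 3 := by rw [card_image_of_injective _ ha]; rfl
  have hcyc : ∀ p ∈ T, #(T.filter (Ahead c p ·)) = 1 := by
    simp only [T, mem_image, mem_univ, true_and, forall_exists_index, forall_apply_eq_imp_iff]
    intro t
    rw [filter_image, card_image_of_injective _ ha, ← hg t]
    simp only [ahead_iff_mem_image]
  rcases r with rA | rB
  · have hrT : rA ∉ T := by simpa [T, eq_comm] using hrA
    refine toric_saturated_of_inl hT hcyc hrT (jB := jB) (fun p => ?_) (fun q => ?_) hS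
    · by_cases hp : p = rA
      · simp [hw, hp, hrT]
      · simp [hw, hp, T, @eq_comm _ p]
    · simp [hw]
  · have hrj : rB ≠ jB := by simpa using hrB
    refine toric_saturated_of_inr hT hcyc (rB := rB) (jB := jB) (fun p => ?_) (fun q => ?_) hS
    · simp [hw, T, eq_comm]
    · by_cases hq : q = rB
      · simp [hw, hq, hrj]
      · simp [hw, hq]
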